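/- Let R be a rewrite system over F and t ∈ T(F, X). If there exists a simplification ordering ≻ such that l ≻ r for every rule l→r ∈ U(t), then for every ground substitution α with Var(t) ⊆ Dom(α) mapping every abstraction variable occurring in t to an R-normal form, every innermost rewrite chain starting from αt is finite (αt innermost terminates). -/

import Mathlib

/-!
Along an innermost derivation from `α t`, every term keeps the invariant `UsableRedexes`: outside
normal-form subterms, only usable rules of `t` can apply. It holds initially because abstraction
variables are mapped to normal forms and every other variable makes all rules usable; it is
preserved because an innermost redex is matched by a substitution into normal forms, and the
usable rules of the right-hand side of a usable rule are usable. So each step replaces an instance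
of some `l ≻ r` inside a context, and the derivation is `≻`-descending. But homeomorphic embedding
well-quasi-orders ground terms over a finite signature (Kruskal), and a simplification ordering
contains embedding, so such a chain `u₀ ≻ u₁ ≻ ⋯` would contain `uₘ ⊴ uₙ` with `m < n`, whence
`uₙ ⪰ uₘ ≻ uₙ`.
-/

namespace TRS

inductive Term (F V : Type*) where
  | var : V → Term F V
  | app : F → List (Term F V) → Term F V

namespace Term

variable {F V : Type*}

mutual
  def subst (σ : V → Term F V) : Term F V → Term F V
    | .var x => σ x
    | .app f ts => .app f (substList σ ts)

  def substList (σ : V → Term F V) : List (Term F V) → List (Term F V)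
    | [] => []
    | t :: ts => subst σ t :: substList σ ts
end

mutual
  def vars : Term F V → Set V
    | .var x => {x}
    | .app _ ts => varsList ts

  def varsList : List (Term F V) → Set V
    | [] => ∅
    | t :: ts => vars t ∪ varsList ts
end

def IsGround (t : Term F V) : Prop := vars t = ∅

def top : Term F V → Option F
  | .var _ => none
  | .app f _ => some f

def subtermAt : List ℕ → Term F V → Option (Term F V)
  | [], t => some t
  | _ :: _, .var _ => none
  | i :: p, .app _ ts =>
    match ts[i]? with
    | none => none
    | some u => subtermAt p u

def replaceAt : List ℕ → Term F V → Term F V → Option (Term F V)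
  | [], _, u => some u
  | _ :: _, .var _, _ => none
  | i :: p, .app f ts, u =>
    match ts[i]? with
    | none => none
    | some ti =>
      match replaceAt p ti u with
      | none => none
      | some ti' => some (.app f (ts.set i ti'))

inductive WF (arity : F → ℕ) : Term F V → Prop
  | var (x : V) : WF arity (.var x)
  | app (f : F) (ts : List (Term F V)) :
      ts.length = arity f → (∀ t ∈ ts, WF arity t) → WF arity (.app f ts)

inductive Occurs (f : F) : Term F V → Prop
  | head (ts : List (Term F V)) : Occurs f (.app f ts)
  | arg {g : F} {ts : List (Term F V)} {t : Term F V} :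
      t ∈ ts → Occurs f t → Occurs f (.app g ts)

end Term

open Term

structure Rule (F V : Type*) where
  lhs : Term F V
  rhs : Term F V

variable {F V : Type*}

/-- The domain of a substitution. -/
def SDom (σ : V → Term F V) : Set V := {x | σ x ≠ Term.var x}

/-- The range (variables) of a substitution. -/
def SRan (σ : V → Term F V) : Set V := ⋃ x ∈ SDom σ, vars (σ x)

/-- A ground substitution maps every variable of its domain to a ground term. -/
def GroundSubst (σ : V → Term F V) : Prop := ∀ x ∈ SDom σ, IsGround (σ x)

/-- `R` is a rewrite system: no left-hand side is a variable, and
`Var(rhs) ⊆ Var(lhs)` for every rule. -/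
def IsRS (R : List (Rule F V)) : Prop :=
  ∀ ρ ∈ R, (∀ x : V, ρ.lhs ≠ Term.var x) ∧ vars ρ.rhs ⊆ vars ρ.lhs

/-- Rewriting at position `p` with the rule `l → r`. -/
def RewriteAtWith (l r : Term F V) (p : List ℕ) (s t : Term F V) : Prop :=
  ∃ τ : V → Term F V, subtermAt p s = some (subst τ l) ∧ replaceAt p s (subst τ r) = some t

/-- Rewriting at position `p` with some rule of `R`. -/
def RewriteAt (R : List (Rule F V)) (p : List ℕ) (s t : Term F V) : Prop :=
  ∃ ρ ∈ R, RewriteAtWith ρ.lhs ρ.rhs p s t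

/-- The rewriting relation induced by `R`. -/
def Rewrite (R : List (Rule F V)) (s t : Term F V) : Prop :=
  ∃ p, RewriteAt R p s t

def ReducibleAt (R : List (Rule F V)) (s : Term F V) (p : List ℕ) : Prop :=
  ∃ t, RewriteAt R p s t

def Reducible (R : List (Rule F V)) (s : Term F V) : Prop :=
  ∃ t, Rewrite R s t

def NormalForm (R : List (Rule F V)) (s : Term F V) : Prop := ¬ Reducible R s

/-- `n` is a normal form of `s`. -/
def IsNormalFormOf (R : List (Rule F V)) (s n : Term F V) : Prop :=
  Relation.ReflTransGen (Rewrite R) s n ∧ NormalForm R n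

/-- `q` is strictly below `p` (`p` is a strict prefix of `q`). -/
def StrictBelow (p q : List ℕ) : Prop := p <+: q ∧ p ≠ q

/-- Innermost rewrite step at position `p`. -/
def InnAt (R : List (Rule F V)) (p : List ℕ) (s t : Term F V) : Prop :=
  RewriteAt R p s t ∧ ∀ q, StrictBelow p q → ¬ ReducibleAt R s q

def InnStep (R : List (Rule F V)) (s t : Term F V) : Prop := ∃ p, InnAt R p s t

/-- Outermost rewrite step at position `p`. -/
def OutAt (R : List (Rule F V)) (p : List ℕ) (s t : Term F V) : Prop :=
  RewriteAt R p s t ∧ ∀ q, StrictBelow q p → ¬ ReducibleAt R s q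

def OutStep (R : List (Rule F V)) (s t : Term F V) : Prop := ∃ p, OutAt R p s t

/-- Innermost rewrite step at position `p` with rule `l → r`. -/
def InnAtWith (R : List (Rule F V)) (l r : Term F V) (p : List ℕ) (s t : Term F V) : Prop :=
  RewriteAtWith l r p s t ∧ ∀ q, StrictBelow p q → ¬ ReducibleAt R s q

/-- Outermost rewrite step at position `p` with rule `l → r`. -/
def OutAtWith (R : List (Rule F V)) (l r : Term F V) (p : List ℕ) (s t : Term F V) : Prop :=
  RewriteAtWith l r p s t ∧ ∀ q, StrictBelow q p → ¬ ReducibleAt R s q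

/-- No infinite innermost derivation starts from `t`. -/
def InnTerminates (R : List (Rule F V)) (t : Term F V) : Prop :=
  ¬ ∃ f : ℕ → Term F V, f 0 = t ∧ ∀ n, InnStep R (f n) (f (n + 1))

/-- No infinite outermost derivation starts from `t`. -/
def OutTerminates (R : List (Rule F V)) (t : Term F V) : Prop :=
  ¬ ∃ f : ℕ → Term F V, f 0 = t ∧ ∀ n, OutStep R (f n) (f (n + 1))

def Unifies (σ : V → Term F V) (u v : Term F V) : Prop := subst σ u = subst σ v

/-- `σ` is a most general unifier of `u` and `v`. -/
def IsMGU (u v : Term F V) (σ : V → Term F V) : Prop :=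
  Unifies σ u v ∧
    ∀ τ : V → Term F V, Unifies τ u v → ∃ ρ : V → Term F V, ∀ x, subst ρ (σ x) = τ x

/-- The usable rules of a term (least set closed under the defining equations). -/
inductive Usable (R : List (Rule F V)) (XA : Set V) : Term F V → Rule F V → Prop
  | var {x : V} {ρ : Rule F V} : x ∉ XA → ρ ∈ R → Usable R XA (Term.var x) ρ
  | rls {f : F} {ts : List (Term F V)} {ρ : Rule F V} :
      ρ ∈ R → Term.top ρ.lhs = some f → Usable R XA (Term.app f ts) ρ
  | arg {f : F} {ts : List (Term F V)} {t : Term F V} {ρ : Rule F V} :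
      t ∈ ts → Usable R XA t ρ → Usable R XA (Term.app f ts) ρ
  | rhs {f : F} {ts : List (Term F V)} {ρ' ρ : Rule F V} :
      ρ' ∈ R → Term.top ρ'.lhs = some f → Usable R XA ρ'.rhs ρ → Usable R XA (Term.app f ts) ρ


theorem _root_.List.Forall₂.exists_mem_of_mem_left {α β : Type*} {R : α → β → Prop}
    {l₁ : List α} {l₂ : List β} (h : List.Forall₂ R l₁ l₂) {a : α} (ha : a ∈ l₁) :
    ∃ b ∈ l₂, R a b := by
  induction h with
  | nil => simp at ha
  | cons hab _ ih =>
    rcases List.mem_cons.1 ha with rfl | ha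
    · exact ⟨_, List.mem_cons_self, hab⟩
    · obtain ⟨b, hb, hab'⟩ := ih ha
      exact ⟨b, List.mem_cons_of_mem _ hb, hab'⟩

theorem _root_.List.Forall₂.imp_of_mem {α β : Type*} {R S : α → β → Prop}
    {l₁ : List α} {l₂ : List β} (h : List.Forall₂ R l₁ l₂)
    (H : ∀ a ∈ l₁, ∀ b ∈ l₂, R a b → S a b) : List.Forall₂ S l₁ l₂ := by
  induction h with
  | nil => exact .nil
  | cons hab _ ih =>
    exact .cons (H _ List.mem_cons_self _ List.mem_cons_self hab)
      (ih fun a ha b hb => H a (List.mem_cons_of_mem _ ha) b (List.mem_cons_of_mem _ hb))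

theorem _root_.List.Forall₂.trans_of_mem {α β γ : Type*} {R : α → β → Prop} {S : β → γ → Prop}
    {T : α → γ → Prop} {l₁ : List α} {l₂ : List β} {l₃ : List γ}
    (h₁ : List.Forall₂ R l₁ l₂) (h₂ : List.Forall₂ S l₂ l₃)
    (H : ∀ a b, ∀ c ∈ l₃, R a b → S b c → T a c) : List.Forall₂ T l₁ l₃ := by
  induction h₁ generalizing l₃ with
  | nil => cases h₂; exact .nil
  | cons hab _ ih =>
    cases h₂ with
    | cons hbc h₂ =>
      exact .cons (H _ _ _ List.mem_cons_self hab hbc)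
        (ih h₂ fun a b c hc => H a b c (List.mem_cons_of_mem _ hc))

namespace Term

@[elab_as_elim]
theorem ind {motive : Term F V → Prop} (var : ∀ x, motive (.var x))
    (app : ∀ f ts, (∀ t ∈ ts, motive t) → motive (.app f ts)) (t : Term F V) : motive t :=
  Term.rec (motive_2 := fun ts => ∀ t ∈ ts, motive t) var app (by simp)
    (fun _ _ ht hts => List.forall_mem_cons.2 ⟨ht, hts⟩) t

theorem sizeOf_lt_of_mem {f : F} {ts : List (Term F V)} {t : Term F V} (h : t ∈ ts) :
    sizeOf t < sizeOf (Term.app f ts) := by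
  have := List.sizeOf_lt_of_mem h
  simp only [Term.app.sizeOf_spec]
  omega

theorem substList_eq_map (σ : V → Term F V) (ts : List (Term F V)) :
    substList σ ts = ts.map (subst σ) := by
  induction ts with
  | nil => rfl
  | cons t ts ih => simp [substList, ih]

@[simp]
theorem subst_var (σ : V → Term F V) (x : V) : subst σ (.var x) = σ x := rfl

@[simp]
theorem subst_app (σ : V → Term F V) (f : F) (ts : List (Term F V)) :
    subst σ (.app f ts) = .app f (ts.map (subst σ)) := by
  simp [subst, substList_eq_map]

@[simp]
theorem mem_vars_var {x y : V} : x ∈ vars (.var y : Term F V) ↔ x = y := by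
  simp [vars]

@[simp]
theorem mem_vars_app {x : V} {f : F} {ts : List (Term F V)} :
    x ∈ vars (.app f ts) ↔ ∃ t ∈ ts, x ∈ vars t := by
  simp only [vars]
  induction ts with
  | nil => simp [varsList]
  | cons t ts ih => simp [varsList, ih]

theorem subst_congr {σ σ' : V → Term F V} {u : Term F V} (h : ∀ x ∈ vars u, σ x = σ' x) :
    subst σ u = subst σ' u := by
  induction u using Term.ind with
  | var x => simpa using h
  | app f ts ih =>
    simp only [subst_app, app.injEq, true_and]
    exact List.map_congr_left fun t ht =>
      ih t ht fun x hx => h x (mem_vars_app.2 ⟨t, ht, hx⟩)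

theorem mem_vars_subst {σ : V → Term F V} {u : Term F V} {y : V} :
    y ∈ vars (subst σ u) ↔ ∃ x ∈ vars u, y ∈ vars (σ x) := by
  induction u using Term.ind with
  | var x => simp
  | app f ts ih =>
    simp only [subst_app, mem_vars_app, List.mem_map]
    constructor
    · rintro ⟨_, ⟨t, ht, rfl⟩, hy⟩
      obtain ⟨x, hx, hxy⟩ := (ih t ht).1 hy
      exact ⟨x, ⟨t, ht, hx⟩, hxy⟩
    · rintro ⟨x, ⟨t, ht, hx⟩, hxy⟩
      exact ⟨_, ⟨t, ht, rfl⟩, (ih t ht).2 ⟨x, hx, hxy⟩⟩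

theorem not_isGround_var (x : V) : ¬ IsGround (.var x : Term F V) := by
  simp [IsGround, vars]

theorem isGround_app_iff {f : F} {ts : List (Term F V)} :
    IsGround (.app f ts) ↔ ∀ t ∈ ts, IsGround t := by
  simp only [IsGround, Set.eq_empty_iff_forall_notMem, mem_vars_app]
  grind

theorem isGround_subst_iff {σ : V → Term F V} {u : Term F V} :
    IsGround (subst σ u) ↔ ∀ x ∈ vars u, IsGround (σ x) := by
  simp only [IsGround, Set.eq_empty_iff_forall_notMem, mem_vars_subst]
  grind

theorem exists_eq_app_of_isGround {t : Term F V} (h : IsGround t) :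
    ∃ f ts, t = .app f ts := by
  cases t with
  | var x => exact absurd h (not_isGround_var x)
  | app f ts => exact ⟨f, ts, rfl⟩

variable {arity : F → ℕ}

theorem wf_app_iff {f : F} {ts : List (Term F V)} :
    WF arity (.app f ts) ↔ ts.length = arity f ∧ ∀ t ∈ ts, WF arity t :=
  ⟨fun h => by cases h with | app _ _ hlen hall => exact ⟨hlen, hall⟩,
    fun h => .app f ts h.1 h.2⟩

theorem WF.subst {σ : V → Term F V} {u : Term F V} (hu : WF arity u)
    (hσ : ∀ x ∈ vars u, WF arity (σ x)) : WF arity (Term.subst σ u) := by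
  induction u using Term.ind with
  | var x => simpa using hσ
  | app f ts ih =>
    rw [wf_app_iff] at hu
    simp only [subst_app, wf_app_iff, List.length_map, List.forall_mem_map]
    exact ⟨hu.1, fun t ht => ih t ht (hu.2 t ht) fun x hx => hσ x (mem_vars_app.2 ⟨t, ht, hx⟩)⟩

theorem WF.of_subst {σ : V → Term F V} {u : Term F V} (h : WF arity (Term.subst σ u))
    {x : V} (hx : x ∈ vars u) : WF arity (σ x) := by
  induction u using Term.ind with
  | var y => simp_all
  | app f ts ih =>
    obtain ⟨t, ht, hxt⟩ := mem_vars_app.1 hx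
    simp only [subst_app, wf_app_iff, List.forall_mem_map] at h
    exact ih t ht (h.2 t ht) hxt

theorem WF.app_set {f : F} {ts : List (Term F V)} {i : ℕ} {u : Term F V}
    (h : WF arity (.app f ts)) (hu : WF arity u) : WF arity (.app f (ts.set i u)) := by
  rw [wf_app_iff] at h ⊢
  refine ⟨by rw [List.length_set, h.1], fun t ht => ?_⟩
  rcases List.mem_or_eq_of_mem_set ht with ht | rfl
  exacts [h.2 t ht, hu]

end Term

section Positions

variable {R : List (Rule F V)}

@[simp]
theorem subtermAt_cons_app {i : ℕ} {p : List ℕ} {f : F} {ts : List (Term F V)} :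
    subtermAt (i :: p) (.app f ts) = ts[i]?.bind (subtermAt p) := by
  cases hts : ts[i]? <;> simp [subtermAt, hts]

theorem replaceAt_cons_app {i : ℕ} {p : List ℕ} {f : F} {ts : List (Term F V)}
    {u : Term F V} :
    replaceAt (i :: p) (.app f ts) u =
      ts[i]?.bind fun ti => (replaceAt p ti u).map fun ti' => .app f (ts.set i ti') := by
  cases hts : ts[i]? with
  | none => simp [replaceAt, hts]
  | some ti => cases hrep : replaceAt p ti u <;> simp [replaceAt, hts, hrep]

theorem rewriteAt_nil_iff {s t : Term F V} :
    RewriteAt R [] s t ↔ ∃ ρ ∈ R, ∃ τ, s = subst τ ρ.lhs ∧ t = subst τ ρ.rhs := by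
  simp [RewriteAt, RewriteAtWith, subtermAt, replaceAt, eq_comm]

theorem rewriteAt_cons_iff {i : ℕ} {p : List ℕ} {s t : Term F V} :
    RewriteAt R (i :: p) s t ↔ ∃ f ts si ti, s = .app f ts ∧ ts[i]? = some si ∧
      RewriteAt R p si ti ∧ t = .app f (ts.set i ti) := by
  cases s with
  | var x => simp [RewriteAt, RewriteAtWith, subtermAt]
  | app f ts =>
    simp only [RewriteAt, RewriteAtWith, subtermAt_cons_app, replaceAt_cons_app,
      Option.bind_eq_some_iff, Option.map_eq_some_iff, Term.app.injEq]
    constructor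
    · rintro ⟨ρ, hρ, τ, ⟨si, hsi, hl⟩, ⟨si', hsi', ti, hr, rfl⟩⟩
      obtain rfl : si = si' := Option.some_injective _ (hsi.symm.trans hsi')
      exact ⟨f, ts, si, ti, ⟨rfl, rfl⟩, hsi, ⟨ρ, hρ, τ, hl, hr⟩, rfl⟩
    · rintro ⟨_, _, si, ti, ⟨rfl, rfl⟩, hsi, ⟨ρ, hρ, τ, hl, hr⟩, rfl⟩
      exact ⟨ρ, hρ, τ, ⟨si, hsi, hl⟩, ⟨si, hsi, ti, hr, rfl⟩⟩

@[elab_as_elim]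
theorem RewriteAt.induction
    {motive : (p : List ℕ) → (s t : Term F V) → RewriteAt R p s t → Prop}
    (root : ∀ ρ ∈ R, ∀ (τ : V → Term F V) (h : RewriteAt R [] (subst τ ρ.lhs) (subst τ ρ.rhs)),
      motive [] _ _ h)
    (arg : ∀ (i : ℕ) (p : List ℕ) (f : F) (ts : List (Term F V)) (si ti : Term F V)
      (_ : ts[i]? = some si) (hst : RewriteAt R p si ti),
        motive p si ti hst → ∀ h : RewriteAt R (i :: p) (.app f ts) (.app f (ts.set i ti)),
          motive (i :: p) _ _ h)
    {p : List ℕ} {s t : Term F V} (h : RewriteAt R p s t) : motive p s t h := by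
  induction p generalizing s t with
  | nil =>
    obtain ⟨ρ, hρ, τ, rfl, rfl⟩ := rewriteAt_nil_iff.1 h
    exact root ρ hρ τ h
  | cons i p ih =>
    obtain ⟨f, ts, si, ti, rfl, hsi, hst, rfl⟩ := rewriteAt_cons_iff.1 h
    exact arg i p f ts si ti hsi hst (ih hst) h

theorem subtermAt_subst (σ : V → Term F V) {q : List ℕ} {u w : Term F V}
    (h : subtermAt q u = some w) : subtermAt q (subst σ u) = some (subst σ w) := by
  induction q generalizing u with
  | nil => simp_all [subtermAt]
  | cons i q ih =>
    cases u with
    | var x => simp [subtermAt] at h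
    | app f ts =>
      obtain ⟨ui, hui, h⟩ := Option.bind_eq_some_iff.1 (subtermAt_cons_app ▸ h)
      simpa [hui] using ih h

theorem exists_subtermAt_var {u : Term F V} {x : V} (hx : x ∈ vars u) :
    ∃ q, subtermAt q u = some (.var x) := by
  induction u using Term.ind with
  | var y => exact ⟨[], by simp_all [subtermAt]⟩
  | app f ts ih =>
    obtain ⟨t, ht, hxt⟩ := mem_vars_app.1 hx
    obtain ⟨q, hq⟩ := ih t ht hxt
    obtain ⟨i, hi, rfl⟩ := List.mem_iff_getElem.1 ht
    exact ⟨i :: q, by simpa [hi] using hq⟩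

theorem ReducibleAt.of_subtermAt {q p : List ℕ} {s u : Term F V}
    (hq : subtermAt q s = some u) (hu : ReducibleAt R u p) : ReducibleAt R s (q ++ p) := by
  induction q generalizing s with
  | nil => simp_all [subtermAt]
  | cons i q ih =>
    cases s with
    | var x => simp [subtermAt] at hq
    | app f ts =>
      obtain ⟨si, hsi, hq⟩ := Option.bind_eq_some_iff.1 (subtermAt_cons_app ▸ hq)
      obtain ⟨ti, hti⟩ := ih hq
      exact ⟨_, rewriteAt_cons_iff.2 ⟨f, ts, si, ti, rfl, hsi, hti, rfl⟩⟩

theorem normalForm_of_innermost_nil {s u : Term F V} {q : List ℕ}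
    (hin : ∀ q, StrictBelow [] q → ¬ ReducibleAt R s q) (hq : q ≠ [])
    (hu : subtermAt q s = some u) : NormalForm R u := by
  rintro ⟨t, p, hp⟩
  exact hin (q ++ p) ⟨List.nil_prefix, by simp [hq]⟩ (ReducibleAt.of_subtermAt hu ⟨t, hp⟩)

theorem innermost_cons {i : ℕ} {p : List ℕ} {f : F} {ts : List (Term F V)} {si : Term F V}
    (hsi : ts[i]? = some si)
    (hin : ∀ q, StrictBelow (i :: p) q → ¬ ReducibleAt R (.app f ts) q) :
    ∀ q, StrictBelow p q → ¬ ReducibleAt R si q := by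
  rintro q ⟨hpq, hne⟩ ⟨ti, hti⟩
  exact hin (i :: q) ⟨List.cons_prefix_cons.2 ⟨rfl, hpq⟩, by simpa using hne⟩
    ⟨_, rewriteAt_cons_iff.2 ⟨f, ts, si, ti, rfl, hsi, hti, rfl⟩⟩

end Positions

section Orders

variable (arity : F → ℕ) (succ : Term F V → Term F V → Prop)

def IsTransOnWF : Prop :=
  ∀ a b c : Term F V, Term.WF arity a → Term.WF arity b → Term.WF arity c →
    succ a b → succ b c → succ a c

def IsFStable : Prop :=
  ∀ (f : F) (pre post : List (Term F V)) (a b : Term F V),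
    Term.WF arity (Term.app f (pre ++ a :: post)) →
    Term.WF arity (Term.app f (pre ++ b :: post)) →
    succ a b → succ (Term.app f (pre ++ a :: post)) (Term.app f (pre ++ b :: post))

def HasSubtermProperty : Prop :=
  ∀ (f : F) (pre post : List (Term F V)) (a : Term F V),
    Term.WF arity (Term.app f (pre ++ a :: post)) →
    succ (Term.app f (pre ++ a :: post)) a

def IsSubstStable : Prop :=
  ∀ (σ : V → Term F V) (a b : Term F V), Term.WF arity a → Term.WF arity b →
    (∀ x, Term.WF arity (σ x)) → succ a b → succ (subst σ a) (subst σ b)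

variable {arity succ}

theorem IsTransOnWF.reflGen (htrans : IsTransOnWF arity succ) {a b c : Term F V}
    (ha : WF arity a) (hb : WF arity b) (hc : WF arity c)
    (hab : Relation.ReflGen succ a b) (hbc : Relation.ReflGen succ b c) :
    Relation.ReflGen succ a c := by
  rw [Relation.reflGen_iff] at hab hbc ⊢
  rcases hab with rfl | hab
  · exact hbc
  rcases hbc with rfl | hbc
  exacts [.inr hab, .inr (htrans a b c ha hb hc hab hbc)]

theorem IsFStable.app_set (hstable : IsFStable arity succ) {f : F} {ts : List (Term F V)}
    {i : ℕ} {a b : Term F V} (hi : ts[i]? = some a) (hwa : WF arity (.app f ts))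
    (hwb : WF arity (.app f (ts.set i b))) (hab : succ a b) :
    succ (.app f ts) (.app f (ts.set i b)) := by
  obtain ⟨hlt, rfl⟩ := List.getElem?_eq_some_iff.1 hi
  have hts : ts = ts.take i ++ ts[i] :: ts.drop (i + 1) := by
    simp
  have hset : ts.set i b = ts.take i ++ b :: ts.drop (i + 1) := by
    simp [List.set_eq_take_append_cons_drop, hlt]
  have := hstable f (ts.take i) (ts.drop (i + 1)) ts[i] b (by rwa [← hts]) (by rwa [← hset]) hab
  rwa [← hts, ← hset] at this

theorem IsSubstStable.subst_of_wf_on_vars (hsubst : IsSubstStable arity succ)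
    {σ : V → Term F V} {l r : Term F V} (hl : WF arity l) (hr : WF arity r)
    (hvars : vars r ⊆ vars l) (hσ : ∀ x ∈ vars l, WF arity (σ x)) (hlr : succ l r) :
    succ (subst σ l) (subst σ r) := by
  classical
  let σ' : V → Term F V := fun x => if x ∈ vars l then σ x else .var x
  have hl' : subst σ' l = subst σ l := subst_congr fun x hx => if_pos hx
  have hr' : subst σ' r = subst σ r := subst_congr fun x hx => if_pos (hvars hx)
  have hσ' : ∀ x, WF arity (σ' x) := fun x => by
    by_cases hx : x ∈ vars l
    · simpa [σ', hx] using hσ x hx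
    · simpa [σ', hx] using WF.var x
  simpa [hl', hr'] using hsubst σ' l r hl hr hσ' hlr

end Orders

section UsableRules

variable {R : List (Rule F V)} {XA : Set V} {t₀ : Term F V}

theorem Usable.mem {u : Term F V} {ρ : Rule F V} (h : Usable R XA u ρ) : ρ ∈ R := by
  induction h with
  | var _ hρ | rls hρ _ => exact hρ
  | arg _ _ ih | rhs _ _ _ ih => exact ih

theorem Usable.of_usable_rhs {ρ ρ' : Rule F V} (h : Usable R XA t₀ ρ)
    (h' : Usable R XA ρ.rhs ρ') : Usable R XA t₀ ρ' := by
  induction h with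
  | var hx _ => exact .var hx h'.mem
  | rls hρ htop => exact .rhs hρ htop h'
  | arg hmem _ ih => exact .arg hmem (ih h')
  | rhs hρ htop _ ih => exact .rhs hρ htop (ih h')

theorem usable_of_mem_vars {x : V} (hx : x ∉ XA) {u : Term F V} (hxu : x ∈ vars u)
    {ρ : Rule F V} (hρ : ρ ∈ R) : Usable R XA u ρ := by
  induction u using Term.ind with
  | var y => exact mem_vars_var.1 hxu ▸ .var hx hρ
  | app f ts ih =>
    obtain ⟨t, ht, hxt⟩ := mem_vars_app.1 hxu
    exact .arg ht (ih t ht hxt)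

/-- The invariant of innermost rewriting from ground instances of `t₀`: outside normal-form
subterms, every rule whose root symbol heads some subterm is a usable rule of `t₀`. -/
inductive UsableRedexes (R : List (Rule F V)) (XA : Set V) (t₀ : Term F V) :
    Term F V → Prop
  | var (x : V) : UsableRedexes R XA t₀ (.var x)
  | nf {s : Term F V} : NormalForm R s → UsableRedexes R XA t₀ s
  | app {f : F} {ts : List (Term F V)} :
      (∀ ρ ∈ R, top ρ.lhs = some f → Usable R XA t₀ ρ) →
      (∀ u ∈ ts, UsableRedexes R XA t₀ u) → UsableRedexes R XA t₀ (.app f ts)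

theorem UsableRedexes.of_forall_usable (h : ∀ ρ ∈ R, Usable R XA t₀ ρ) (s : Term F V) :
    UsableRedexes R XA t₀ s := by
  induction s using Term.ind with
  | var x => exact .var x
  | app f ts ih => exact .app (fun ρ hρ _ => h ρ hρ) ih

theorem UsableRedexes.subst {σ : V → Term F V} {u : Term F V}
    (hu : ∀ ρ, Usable R XA u ρ → Usable R XA t₀ ρ)
    (hσ : ∀ x ∈ vars u, UsableRedexes R XA t₀ (σ x)) :
    UsableRedexes R XA t₀ (Term.subst σ u) := by
  induction u using Term.ind with
  | var x => simpa using hσ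
  | app f ts ih =>
    rw [subst_app]
    refine .app (fun ρ hρ htop => hu ρ (.rls hρ htop)) ?_
    simp only [List.forall_mem_map]
    exact fun t ht => ih t ht (fun ρ h => hu ρ (.arg ht h))
      fun x hx => hσ x (mem_vars_app.2 ⟨t, ht, hx⟩)

theorem UsableRedexes.subst_self {α : V → Term F V}
    (hnf : ∀ x ∈ vars t₀, x ∈ XA → NormalForm R (α x)) :
    UsableRedexes R XA t₀ (Term.subst α t₀) := by
  refine .subst (fun _ h => h) fun x hx => ?_
  by_cases hxA : x ∈ XA
  · exact .nf (hnf x hx hxA)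
  · exact .of_forall_usable (fun ρ hρ => usable_of_mem_vars hxA hx hρ) _

theorem UsableRedexes.of_reducible_app {f : F} {ts : List (Term F V)}
    (h : UsableRedexes R XA t₀ (.app f ts)) (hred : Reducible R (.app f ts)) :
    (∀ ρ ∈ R, top ρ.lhs = some f → Usable R XA t₀ ρ) ∧ ∀ u ∈ ts, UsableRedexes R XA t₀ u := by
  cases h with
  | nf hnf => exact absurd hred hnf
  | app hhead hargs => exact ⟨hhead, hargs⟩

theorem UsableRedexes.usable_of_root {ρ : Rule F V} {τ : V → Term F V} (hRS : IsRS R)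
    (hρ : ρ ∈ R) (h : UsableRedexes R XA t₀ (Term.subst τ ρ.lhs)) : Usable R XA t₀ ρ := by
  have hred : Reducible R (Term.subst τ ρ.lhs) :=
    ⟨_, [], rewriteAt_nil_iff.2 ⟨ρ, hρ, τ, rfl, rfl⟩⟩
  cases hl : ρ.lhs with
  | var y => exact absurd hl ((hRS ρ hρ).1 y)
  | app g ls =>
    rw [hl, subst_app] at h hred
    exact (h.of_reducible_app hred).1 ρ hρ (by rw [hl]; rfl)

end UsableRules

section Steps

variable {arity : F → ℕ} {R : List (Rule F V)} {p : List ℕ} {s t : Term F V}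

theorem RewriteAt.isGround (hRS : IsRS R) (h : RewriteAt R p s t) (hs : IsGround s) :
    IsGround t := by
  induction h using RewriteAt.induction with
  | root ρ hρ τ _ =>
    rw [isGround_subst_iff] at hs ⊢
    exact fun x hx => hs x ((hRS ρ hρ).2 hx)
  | arg i p f ts si ti hsi _ ih _ =>
    rw [isGround_app_iff] at hs ⊢
    intro u hu
    rcases List.mem_or_eq_of_mem_set hu with hu | rfl
    exacts [hs u hu, ih (hs si (List.mem_of_getElem? hsi))]

theorem RewriteAt.wf (hRS : IsRS R) (hRwf : ∀ ρ ∈ R, WF arity ρ.lhs ∧ WF arity ρ.rhs)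
    (h : RewriteAt R p s t) (hs : WF arity s) : WF arity t := by
  induction h using RewriteAt.induction with
  | root ρ hρ τ _ => exact (hRwf ρ hρ).2.subst fun x hx => hs.of_subst ((hRS ρ hρ).2 hx)
  | arg i p f ts si ti hsi _ ih _ =>
    exact hs.app_set (ih ((wf_app_iff.1 hs).2 si (List.mem_of_getElem? hsi)))

theorem normalForm_subst_of_innermost {l : Term F V} {τ : V → Term F V}
    (hl : ∀ y, l ≠ .var y) (hin : ∀ q, StrictBelow [] q → ¬ ReducibleAt R (subst τ l) q)
    {x : V} (hx : x ∈ vars l) : NormalForm R (τ x) := by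
  obtain ⟨q, hq⟩ := exists_subtermAt_var hx
  have hq_ne : q ≠ [] := by
    rintro rfl
    exact hl x (by simpa [subtermAt] using hq)
  exact normalForm_of_innermost_nil hin hq_ne (subtermAt_subst τ hq)

section Invariant

variable {XA : Set V} {t₀ : Term F V}

theorem InnAt.usableRedexes (hRS : IsRS R) (h : InnAt R p s t)
    (hs : UsableRedexes R XA t₀ s) : UsableRedexes R XA t₀ t := by
  obtain ⟨h, hin⟩ := h
  induction h using RewriteAt.induction with
  | root ρ hρ τ _ =>
    exact .subst (fun _ => (hs.usable_of_root hRS hρ).of_usable_rhs) fun x hx =>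
      .nf (normalForm_subst_of_innermost (hRS ρ hρ).1 hin ((hRS ρ hρ).2 hx))
  | arg i p f ts si ti hsi _ ih hstep =>
    obtain ⟨hhead, hargs⟩ := hs.of_reducible_app ⟨_, _, hstep⟩
    refine .app hhead fun u hu => ?_
    rcases List.mem_or_eq_of_mem_set hu with hu | rfl
    exacts [hargs u hu, ih (hargs si (List.mem_of_getElem? hsi)) (innermost_cons hsi hin)]

theorem RewriteAt.succ {succ : Term F V → Term F V → Prop} (hRS : IsRS R)
    (hRwf : ∀ ρ ∈ R, WF arity ρ.lhs ∧ WF arity ρ.rhs) (hstable : IsFStable arity succ)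
    (hsubst : IsSubstStable arity succ) (horient : ∀ ρ, Usable R XA t₀ ρ → succ ρ.lhs ρ.rhs)
    (h : RewriteAt R p s t) (hws : WF arity s) (hs : UsableRedexes R XA t₀ s) : succ s t := by
  induction h using RewriteAt.induction with
  | root ρ hρ τ _ =>
    exact hsubst.subst_of_wf_on_vars (hRwf ρ hρ).1 (hRwf ρ hρ).2 (hRS ρ hρ).2
      (fun x hx => hws.of_subst hx) (horient ρ (hs.usable_of_root hRS hρ))
  | arg i p f ts si ti hsi _ ih hstep =>
    have hsi_mem := List.mem_of_getElem? hsi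
    exact hstable.app_set hsi hws (hstep.wf hRS hRwf hws)
      (ih ((wf_app_iff.1 hws).2 si hsi_mem) ((hs.of_reducible_app ⟨_, _, hstep⟩).2 si hsi_mem))

end Invariant

end Steps

inductive HomeoEmb : Term F V → Term F V → Prop
  | var (x : V) : HomeoEmb (.var x) (.var x)
  | dive {s t : Term F V} {f : F} {ts : List (Term F V)} :
      t ∈ ts → HomeoEmb s t → HomeoEmb s (.app f ts)
  | node {f : F} {ss ts : List (Term F V)} :
      List.Forall₂ HomeoEmb ss ts → HomeoEmb (.app f ss) (.app f ts)

namespace HomeoEmb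

theorem refl (t : Term F V) : HomeoEmb t t := by
  induction t using Term.ind with
  | var x => exact .var x
  | app f ts ih => exact .node (List.forall₂_same.2 ih)

theorem trans {a b c : Term F V} (hab : HomeoEmb a b) (hbc : HomeoEmb b c) : HomeoEmb a c := by
  induction c using Term.ind generalizing a b with
  | var x =>
    cases hbc
    exact hab
  | app f ts ih =>
    cases hbc with
    | dive ht hbt => exact .dive ht (ih _ ht hab hbt)
    | node hbc =>
      cases hab with
      | dive hs has =>
        obtain ⟨t, ht, hst⟩ := hbc.exists_mem_of_mem_left hs
        exact .dive ht (ih t ht has hst)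
      | node hab => exact .node (hab.trans_of_mem hbc fun _ _ t ht => ih t ht)

instance : IsPreorder (Term F V) HomeoEmb where
  refl := refl
  trans _ _ _ := trans

end HomeoEmb

/-- The core of Nash-Williams' minimal bad sequence argument. -/
theorem _root_.Set.PartiallyWellOrderedOn.iUnion_of_isMinBadSeq {α : Type*}
    {r : α → α → Prop} [IsTrans α r] {rk : α → ℕ} {s : Set α} {f : ℕ → α}
    (hf : Set.PartiallyWellOrderedOn.IsBadSeq r s f)
    (hmin : ∀ n, Set.PartiallyWellOrderedOn.IsMinBadSeq r rk s n f) {c : ℕ → Set α}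
    (hcs : ∀ n, c n ⊆ s) (hrk : ∀ n, ∀ a ∈ c n, rk a < rk (f n))
    (hr : ∀ n, ∀ a ∈ c n, r a (f n)) : (⋃ n, c n).PartiallyWellOrderedOn r := by
  rw [Set.PartiallyWellOrderedOn.iff_forall_not_isBadSeq]
  rintro g ⟨hgc, hgbad⟩
  simp only [Set.mem_iUnion] at hgc
  choose N hN using hgc
  let i₀ := Function.argmin N
  have hi₀ : ∀ j, N i₀ ≤ N j := fun j => Function.argmin_le N j
  -- splice `g` into `f` after the first `N i₀` terms
  refine hmin (N i₀) (fun m => if m < N i₀ then f m else g (i₀ + (m - N i₀)))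
    (fun m hm => (if_pos hm).symm) (by simpa using hrk _ _ (hN i₀)) ⟨fun m => ?_, ?_⟩
  · dsimp only
    split_ifs
    exacts [hf.1 m, hcs _ (hN _)]
  · intro m n hmn hrmn
    dsimp only at hrmn
    split_ifs at hrmn with hm hn hn
    · exact hf.2 m n hmn hrmn
    · exact hf.2 m (N _) (hm.trans_le (hi₀ _)) (_root_.trans hrmn (hr _ _ (hN _)))
    · omega
    · exact hgbad _ _ (by omega) hrmn

/-- Kruskal's tree theorem. -/
theorem partiallyWellOrderedOn_homeoEmb [Finite F] (arity : F → ℕ) :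
    {t : Term F V | IsGround t ∧ WF arity t}.PartiallyWellOrderedOn HomeoEmb := by
  rw [Set.PartiallyWellOrderedOn.iff_not_exists_isMinBadSeq sizeOf]
  rintro ⟨f, hbad, hmin⟩
  choose hd args hf using fun n => exists_eq_app_of_isGround (hbad.1 n).1
  have hargs : ∀ n, ∀ u ∈ args n, IsGround u ∧ WF arity u := fun n u hu => by
    have : IsGround (f n) ∧ WF arity (f n) := hbad.1 n
    rw [hf n, isGround_app_iff, wf_app_iff] at this
    exact ⟨this.1 u hu, this.2.2 u hu⟩
  have hlen : ∀ n, (args n).length = arity (hd n) := fun n => by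
    have := (hbad.1 n).2
    rw [hf n, wf_app_iff] at this
    exact this.1
  have hC : (⋃ n, {u | u ∈ args n}).PartiallyWellOrderedOn HomeoEmb :=
    Set.PartiallyWellOrderedOn.iUnion_of_isMinBadSeq hbad hmin (fun n u hu => hargs n u hu)
      (fun n u hu => hf n ▸ sizeOf_lt_of_mem hu) (fun n u hu => hf n ▸ .dive hu (.refl u))
  obtain ⟨m, n, hmn, hhead, hsub⟩ :=
    ((Set.finite_univ (α := F)).partiallyWellOrderedOn (r := Eq)).prod
      (hC.partiallyWellOrderedOn_sublistForall₂ HomeoEmb) |>.exists_lt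
      (f := fun n => (hd n, args n)) fun n => ⟨trivial, fun u hu => Set.mem_iUnion.2 ⟨n, hu⟩⟩
  dsimp only at hhead hsub
  obtain ⟨l, hl, hsl⟩ := List.sublistForall₂_iff.1 hsub
  -- argument lists of the same head symbol have the same length
  obtain rfl : l = args n := hsl.eq_of_length (by rw [← hl.length_eq, hlen, hlen, hhead])
  exact hbad.2 m n hmn (by rw [hf m, hf n, hhead]; exact .node hl)

section SimplificationOrder

variable {arity : F → ℕ} {succ : Term F V → Term F V → Prop}

theorem reflGen_app_of_forall₂ (htrans : IsTransOnWF arity succ)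
    (hstable : IsFStable arity succ) {f : F} {ss ts : List (Term F V)}
    (h : List.Forall₂ (fun s t => Relation.ReflGen succ t s) ss ts) (pre : List (Term F V))
    (hws : WF arity (.app f (pre ++ ss))) (hwt : WF arity (.app f (pre ++ ts))) :
    Relation.ReflGen succ (.app f (pre ++ ts)) (.app f (pre ++ ss)) := by
  induction h generalizing pre with
  | nil => exact .refl
  | @cons s t ss ts hst _ ih =>
    have hwm : WF arity (.app f (pre ++ s :: ts)) := by
      rw [wf_app_iff] at hws hwt ⊢
      refine ⟨by simpa using hwt.1, fun u hu => ?_⟩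
      simp only [List.mem_append, List.mem_cons] at hu
      rcases hu with hu | rfl | hu
      · exact hws.2 u (by simp [hu])
      · exact hws.2 u (by simp)
      · exact hwt.2 u (by simp [hu])
    have hhead : Relation.ReflGen succ (.app f (pre ++ t :: ts)) (.app f (pre ++ s :: ts)) := by
      rcases (Relation.reflGen_iff _ _ _).1 hst with rfl | hst
      exacts [.refl, .single (hstable f pre ts t s hwt hwm hst)]
    have htail := ih (pre ++ [s]) (by simpa using hws) (by simpa using hwm)
    simp only [List.append_assoc, List.cons_append, List.nil_append] at htail
    exact htrans.reflGen hwt hwm hws hhead htail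

theorem reflGen_of_homeoEmb (htrans : IsTransOnWF arity succ) (hstable : IsFStable arity succ)
    (hsubterm : HasSubtermProperty arity succ) {s t : Term F V} (h : HomeoEmb s t)
    (hws : WF arity s) (hwt : WF arity t) : Relation.ReflGen succ t s := by
  induction t using Term.ind generalizing s with
  | var x =>
    cases h
    exact .refl
  | app f ts ih =>
    cases h with
    | dive ht hst =>
      have hwt' := (wf_app_iff.1 hwt).2 _ ht
      obtain ⟨pre, post, rfl⟩ := List.append_of_mem ht
      exact htrans.reflGen hwt hwt' hws (.single (hsubterm f pre post _ hwt))
        (ih _ ht hst hws hwt')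
    | node hst =>
      have := reflGen_app_of_forall₂ htrans hstable
        (hst.imp_of_mem fun a ha b hb hab =>
          ih b hb hab ((wf_app_iff.1 hws).2 a ha) ((wf_app_iff.1 hwt).2 b hb))
        [] (by simpa using hws) (by simpa using hwt)
      simpa using this

theorem not_forall_succ_apply_add_one [Finite F] (htrans : IsTransOnWF arity succ)
    (hirrefl : ∀ a, WF arity a → ¬ succ a a) (hstable : IsFStable arity succ)
    (hsubterm : HasSubtermProperty arity succ) (f : ℕ → Term F V)
    (hf : ∀ n, IsGround (f n) ∧ WF arity (f n)) : ¬ ∀ n, succ (f n) (f (n + 1)) := by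
  intro hdesc
  have hlt : ∀ m n, m < n → succ (f m) (f n) := fun m n hmn => by
    induction n, hmn using Nat.le_induction with
    | base => exact hdesc m
    | succ n hmn ih => exact htrans _ _ _ (hf m).2 (hf n).2 (hf _).2 ih (hdesc n)
  obtain ⟨m, n, hmn, hemb⟩ := (partiallyWellOrderedOn_homeoEmb arity).exists_lt hf
  rcases (Relation.reflGen_iff _ _ _).1
    (reflGen_of_homeoEmb htrans hstable hsubterm hemb (hf m).2 (hf n).2) with h | h
  · exact hirrefl _ (hf m).2 (h ▸ hlt m n hmn)
  · exact hirrefl _ (hf m).2 (htrans _ _ _ (hf m).2 (hf n).2 (hf m).2 (hlt m n hmn) h)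

end SimplificationOrder

/-- if a simplification ordering orients all usable rules of `t`,
then every ground instance of `t` (with abstraction variables mapped to normal forms)
innermost terminates. -/
theorem usable_simp_order_innermost_terminates {F V : Type*} [Finite F] (arity : F → ℕ)
    (R : List (Rule F V)) (hRS : IsRS R)
    (hRwf : ∀ ρ ∈ R, Term.WF arity ρ.lhs ∧ Term.WF arity ρ.rhs)
    (XA : Set V) (t : Term F V) (hwt : Term.WF arity t)
    -- a simplification ordering `succ` on the terms of the signature:
    (succ : Term F V → Term F V → Prop)
    (htrans : ∀ a b c : Term F V, Term.WF arity a → Term.WF arity b → Term.WF arity c →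
        succ a b → succ b c → succ a c)
    (hirrefl : ∀ a : Term F V, Term.WF arity a → ¬ succ a a)
    -- F-stability
    (hstable : ∀ (f : F) (pre post : List (Term F V)) (a b : Term F V),
        Term.WF arity (Term.app f (pre ++ a :: post)) →
        Term.WF arity (Term.app f (pre ++ b :: post)) →
        succ a b → succ (Term.app f (pre ++ a :: post)) (Term.app f (pre ++ b :: post)))
    -- subterm property
    (hsubterm : ∀ (f : F) (pre post : List (Term F V)) (a : Term F V),
        Term.WF arity (Term.app f (pre ++ a :: post)) →
        succ (Term.app f (pre ++ a :: post)) a)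
    -- stability under substitution
    (hsubst : ∀ (σ : V → Term F V) (a b : Term F V), Term.WF arity a → Term.WF arity b →
        (∀ x, Term.WF arity (σ x)) → succ a b → succ (subst σ a) (subst σ b))
    -- `succ` orients the usable rules of `t`
    (horient : ∀ ρ : Rule F V, Usable R XA t ρ → succ ρ.lhs ρ.rhs)
    (α : V → Term F V)
    (hg : ∀ x ∈ vars t, IsGround (α x))
    (hwα : ∀ x ∈ vars t, Term.WF arity (α x))
    (hnf : ∀ x ∈ vars t, x ∈ XA → NormalForm R (α x)) :
    InnTerminates R (subst α t) := by
  rintro ⟨f, hf0, hstep⟩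
  have hinv : ∀ n, (IsGround (f n) ∧ WF arity (f n)) ∧ UsableRedexes R XA t (f n) := by
    intro n
    induction n with
    | zero =>
      rw [hf0]
      exact ⟨⟨isGround_subst_iff.2 hg, hwt.subst hwα⟩, .subst_self hnf⟩
    | succ n ih =>
      obtain ⟨p, hp⟩ := hstep n
      exact ⟨⟨hp.1.isGround hRS ih.1.1, hp.1.wf hRS hRwf ih.1.2⟩, hp.usableRedexes hRS ih.2⟩
  refine not_forall_succ_apply_add_one htrans hirrefl hstable hsubterm f (fun n => (hinv n).1)
    fun n => ?_
  obtain ⟨p, hp⟩ := hstep n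
  exact hp.1.succ hRS hRwf hstable hsubst horient (hinv n).1.2 (hinv n).2

end TRS
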